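/- arXiv:2510.24914 — 5 statements merged into one kernel-verified Lean document; each statement's English description precedes it below -/
import Mathlib

section
/- For every d ∈ ℕ and every real x ∈ [0, 1) such that the series Σ_{n≥1} A_{d+1,n} x^{n−1} converges, the following hold: for every integer j ≥ 1 the series Σ_{n≥1} A_{d,n} x^{jn} converges, the series Σ_{j≥1} (1/j) · (Σ_{n≥1} A_{d,n} x^{jn}) converges, and Σ_{n≥1} A_{d+1,n} x^{n−1} = exp( Σ_{j≥1} (1/j) · Σ_{n≥1} A_{d,n} x^{jn} ). Equivalently, writing φ_d(x) := Σ_{n≥1} A_{d,n} x^{n−1}, one has φ_{d+1}(x) = exp( Σ_{j≥1} (x^j / j) · φ_d(x^j) ). -/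
/-- Rooted unlabeled trees of depth at most `d`: `T_0` is the single-vertex tree and
`T_{d+1}` is the type of multisets of trees in `T_d`. -/
def TreeT : ℕ → Type
  | 0 => PUnit
  | d + 1 => Multiset (TreeT d)

/-- Number of vertices of a tree. -/
def treeSize : (d : ℕ) → TreeT d → ℕ
  | 0, _ => 1
  | d + 1, m => 1 + (Multiset.map (treeSize d) (m : Multiset (TreeT d))).sum

/-- `aCount d n` is the number of rooted unlabeled trees of depth at most `d`
with exactly `n` vertices. -/
noncomputable def aCount (d n : ℕ) : ℕ :=
  {t : TreeT d | treeSize d t = n}.ncard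

/-!
A tree of depth at most `d + 1` is a multiset of trees of depth at most `d`, and its size is one
more than the total size of that multiset. Hence, in `ℝ≥0∞`, where series can be rearranged
freely, `φ_{d+1}(x) = Σ_m x^{Σ_{t ∈ m} |t|}` equals the Euler product `∏_t (1 - x^{|t|})⁻¹`
over all trees `t` of depth at most `d`. Since `φ_{d+1}(x)` is finite, the product converges
in `ℝ`, and taking logarithms gives `log φ_{d+1}(x) = Σ_t Σ_{j ≥ 1} x^{j|t|} / j`. Swapping
these two nonnegative sums and grouping the trees by size yields
`Σ_{j ≥ 1} (1/j) Σ_n A_{d,n} x^{jn}`.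
-/

open scoped ENNReal

theorem Multiset.finite_setOf_sum_map_le {β : Type*} {f : β → ℕ} (hpos : ∀ b, 0 < f b)
    (hf : ∀ n, {b | f b ≤ n}.Finite) (n : ℕ) :
    {m : Multiset β | (m.map f).sum ≤ n}.Finite := by
  classical
  set S := (hf n).toFinset
  refine (n • S.val).powerset.toFinset.finite_toSet.subset fun m hm => ?_
  have hm : (m.map f).sum ≤ n := hm
  have hcard : Multiset.card m ≤ n := by
    have := Multiset.card_nsmul_le_sum (s := m.map f) (a := 1)
      (Multiset.forall_mem_map_iff.2 fun b _ => hpos b)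
    simp only [Multiset.card_map, smul_eq_mul, mul_one] at this
    omega
  simp only [Finset.mem_coe, Multiset.mem_toFinset, Multiset.mem_powerset, Multiset.le_iff_count]
  intro b
  by_cases hb : b ∈ m
  · have hbS : b ∈ S := (hf n).mem_toFinset.2
      ((Multiset.le_sum_of_mem (Multiset.mem_map_of_mem f hb)).trans hm)
    rw [Multiset.count_nsmul, Multiset.count_eq_one_of_mem S.nodup hbS, mul_one]
    exact (Multiset.count_le_card b m).trans hcard
  · simp [Multiset.count_eq_zero_of_notMem hb]

theorem treeSize_pos : ∀ d (t : TreeT d), 0 < treeSize d t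
  | 0, _ => Nat.one_pos
  | _ + 1, _ => Nat.add_pos_left Nat.one_pos _

theorem finite_setOf_treeSize_le : ∀ d n, {t : TreeT d | treeSize d t ≤ n}.Finite
  | 0, _ => Set.toFinite (α := PUnit) _
  | d + 1, n => (Multiset.finite_setOf_sum_map_le (treeSize_pos d)
      (finite_setOf_treeSize_le d) n).subset fun _ h => (Nat.le_add_left _ 1).trans h

theorem HasSum.ncard_fiber_nsmul {β γ M : Type*} [AddCommMonoid M] [TopologicalSpace M]
    [ContinuousAdd M] [RegularSpace M] {f : β → γ} (hf : ∀ n, (f ⁻¹' {n}).Finite)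
    {c : γ → M} {a : M} (h : HasSum (fun b => c (f b)) a) :
    HasSum (fun n => (f ⁻¹' {n}).ncard • c n) a := by
  refine ((Equiv.sigmaFiberEquiv f).hasSum_iff.2 h).sigma fun n => ?_
  have : Fintype {b // f b = n} := (hf n).fintype
  convert hasSum_fintype fun b : {b // f b = n} => c (f b) using 1
  · rfl
  · rw [Finset.sum_congr rfl fun b _ => congrArg c b.2, Finset.sum_const, Finset.card_univ,
      ← Nat.card_eq_fintype_card, ← Nat.card_coe_set_eq]
    rfl

theorem hasSum_aCount_nsmul {M : Type*} [AddCommMonoid M] [TopologicalSpace M] [ContinuousAdd M]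
    [RegularSpace M] {d : ℕ} {c : ℕ → M} {a : M}
    (h : HasSum (fun t : TreeT d => c (treeSize d t)) a) :
    HasSum (fun n => aCount d (n + 1) • c (n + 1)) a := by
  have hfib := h.ncard_fiber_nsmul fun n =>
    (finite_setOf_treeSize_le d n).subset fun _ ht => le_of_eq ht
  refine (Nat.succ_injective.hasSum_iff fun n hn => ?_).2 hfib
  obtain rfl : n = 0 := by simpa [Nat.succ_eq_add_one] using hn
  have hempty : treeSize d ⁻¹' {0} = ∅ :=
    Set.eq_empty_of_forall_notMem fun t ht => (treeSize_pos d t).ne' ht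
  simp [hempty]

theorem ENNReal.tsum_eq_iSup_tsum_subtype {α ι : Type*} (f : α → ℝ≥0∞) (S : ι → Set α)
    (hS : ∀ t : Finset α, ∃ i, ↑t ⊆ S i) : ∑' a, f a = ⨆ i, ∑' a : S i, f a := by
  refine le_antisymm ?_ (iSup_le fun i => ?_)
  · rw [ENNReal.tsum_eq_iSup_sum]
    refine iSup_le fun t => ?_
    obtain ⟨i, hi⟩ := hS t
    calc ∑ a ∈ t, f a = ∑' a : (t : Set α), f a := (Finset.tsum_subtype t f).symm
      _ ≤ ∑' a : S i, f a := ENNReal.tsum_mono_subtype f hi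
      _ ≤ ⨆ i, ∑' a : S i, f a := le_iSup (fun i => ∑' a : S i, f a) i
  · simpa only [tsum_univ] using ENNReal.tsum_mono_subtype f (Set.subset_univ (S i))

namespace Multiset

def supportedInsertEquiv {α : Type*} [DecidableEq α] {a : α} {s : Finset α} (ha : a ∉ s) :
    ℕ × {m : Multiset α // ∀ t ∈ m, t ∈ s} ≃ {m : Multiset α // ∀ t ∈ m, t ∈ insert a s} where
  toFun p := ⟨replicate p.1 a + p.2, fun t ht => by
    rcases mem_add.1 ht with h | h
    · rw [eq_of_mem_replicate h]; exact Finset.mem_insert_self a s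
    · exact Finset.mem_insert_of_mem (p.2.2 t h)⟩
  invFun m := (m.1.count a, ⟨m.1.filter (· ≠ a), fun t ht => by
    obtain ⟨htm, hta⟩ := mem_filter.1 ht
    exact (Finset.mem_insert.1 (m.2 t htm)).resolve_left hta⟩)
  left_inv := fun ⟨k, m, hm⟩ => by
    have ham : a ∉ m := fun h => ha (hm a h)
    have hrep : (replicate k a).filter (· ≠ a) = 0 :=
      filter_eq_nil.2 fun t ht => not_not.2 (eq_of_mem_replicate ht)
    have hm' : m.filter (· ≠ a) = m := filter_eq_self.2 fun t ht hta => ham (hta ▸ ht)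
    refine Prod.ext ?_ (Subtype.ext ?_)
    · simp [count_eq_zero_of_notMem ham]
    · simp only [filter_add, hrep, hm', zero_add]
  right_inv m := Subtype.ext <| by
    simpa only [← filter_eq'] using filter_add_not (· = a) m.1

end Multiset

theorem ENNReal.tsum_supported_prod_map {α : Type*} (w : α → ℝ≥0∞) (s : Finset α) :
    ∑' m : {m : Multiset α // ∀ t ∈ m, t ∈ s}, (m.1.map w).prod = ∏ t ∈ s, (1 - w t)⁻¹ := by
  classical
  induction s using Finset.induction_on with
  | empty =>
    rw [Finset.prod_empty, tsum_eq_single ⟨0, by simp⟩ fun m hm => absurd (Subtype.ext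
      (Multiset.eq_zero_of_forall_notMem fun t ht => by simpa using m.2 t ht)) hm]
    rfl
  | insert a s ha ih =>
    rw [Finset.prod_insert ha, ← ih, ← ENNReal.tsum_geometric, ← ENNReal.tsum_mul_right,
      ← (Multiset.supportedInsertEquiv ha).tsum_eq]
    simp only [← ENNReal.tsum_mul_left]
    rw [← ENNReal.tsum_prod]
    refine tsum_congr fun p => ?_
    simp [Multiset.supportedInsertEquiv]

theorem ENNReal.tsum_multiset_prod_map {α : Type*} (w : α → ℝ≥0∞) :
    ∑' m : Multiset α, (m.map w).prod = ⨆ s : Finset α, ∏ t ∈ s, (1 - w t)⁻¹ := by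
  classical
  rw [ENNReal.tsum_eq_iSup_tsum_subtype _ (fun s : Finset α => {m : Multiset α | ∀ t ∈ m, t ∈ s})
    fun M => ⟨M.biUnion Multiset.toFinset, fun m hm t ht =>
      Finset.mem_biUnion.2 ⟨m, hm, Multiset.mem_toFinset.2 ht⟩⟩]
  exact iSup_congr fun s => ENNReal.tsum_supported_prod_map w s

theorem hasProd_of_iSup_ofReal {α : Type*} {f : α → ℝ} (hf : ∀ a, 1 ≤ f a) {p : ℝ}
    (h : ⨆ s : Finset α, ENNReal.ofReal (∏ a ∈ s, f a) = ENNReal.ofReal p) : HasProd f p := by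
  have hmono : Monotone fun s : Finset α => ∏ a ∈ s, f a := fun s t hst =>
    Finset.prod_le_prod_of_subset_of_one_le hst (fun a _ => zero_le_one.trans (hf a))
      fun a _ _ => hf a
  refine tendsto_atTop_isLUB hmono ⟨?_, fun b hb => ?_⟩
  · rintro _ ⟨s, rfl⟩
    have hle : ENNReal.ofReal (∏ a ∈ s, f a) ≤ ENNReal.ofReal p :=
      h ▸ le_iSup (fun s => ENNReal.ofReal (∏ a ∈ s, f a)) s
    exact (ENNReal.ofReal_le_ofReal_iff'.1 hle).resolve_right
      (not_le.2 (one_pos.trans_le (Finset.one_le_prod fun a _ => hf a)))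
  · have hle : ENNReal.ofReal p ≤ ENNReal.ofReal b :=
      h ▸ iSup_le fun s => ENNReal.ofReal_le_ofReal (hb ⟨s, rfl⟩)
    exact (ENNReal.ofReal_le_ofReal_iff'.1 hle).elim id fun hp =>
      hp.trans (zero_le_one.trans (hb ⟨∅, Finset.prod_empty⟩))

theorem Real.hasSum_log_of_hasProd {α : Type*} {f : α → ℝ} (hf : ∀ a, 0 < f a) {p : ℝ}
    (hp : p ≠ 0) (h : HasProd f p) : HasSum (fun a => Real.log (f a)) (Real.log p) := by
  refine ((Real.continuousAt_log hp).tendsto.comp h).congr fun s => ?_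
  simp [Real.log_prod fun a _ => (hf a).ne']

theorem hasSum_tsum_pow_div_of_hasSum_neg_log {β : Type*} {y : β → ℝ} (hy0 : ∀ b, 0 ≤ y b)
    (hy1 : ∀ b, y b < 1) {ℓ : ℝ} (h : HasSum (fun b => -Real.log (1 - y b)) ℓ) :
    (∀ j : ℕ, Summable fun b => y b ^ (j + 1)) ∧
      HasSum (fun j : ℕ => ∑' b, y b ^ (j + 1) / (j + 1)) ℓ := by
  set F : β × ℕ → ℝ := fun p => y p.1 ^ (p.2 + 1) / (p.2 + 1)
  have hrow : ∀ b, HasSum (fun j => F (b, j)) (-Real.log (1 - y b)) := fun b =>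
    Real.hasSum_pow_div_log_of_abs_lt_one (abs_lt.2 ⟨by linarith [hy0 b], hy1 b⟩)
  have hF : Summable F := (summable_prod_of_nonneg fun p => div_nonneg (pow_nonneg (hy0 _) _)
      p.2.cast_add_one_pos.le).2
    ⟨fun b => (hrow b).summable, h.summable.congr fun b => (hrow b).tsum_eq.symm⟩
  have hFℓ : HasSum F ℓ := by
    convert hF.hasSum
    exact h.unique (hF.hasSum.prod_fiberwise hrow)
  have hswap := (Equiv.prodComm ℕ β).hasSum_iff.2 hFℓ
  have hcol : ∀ j : ℕ, Summable fun b => y b ^ (j + 1) / (j + 1) := fun j =>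
    hswap.summable.prod_factor j
  refine ⟨fun j => ?_, hswap.prod_fiberwise fun j => (hcol j).hasSum⟩
  exact (summable_div_const_iff (j.cast_add_one_pos (α := ℝ)).ne').1 (hcol j)

theorem iSup_ofReal_prod_inv_one_sub_pow_treeSize {d : ℕ} {x : ℝ} (hx0 : 0 ≤ x) (hx1 : x < 1)
    (hsum : Summable fun n : ℕ => (aCount (d + 1) (n + 1) : ℝ) * x ^ n) :
    ⨆ s : Finset (TreeT d), ENNReal.ofReal (∏ t ∈ s, (1 - x ^ treeSize d t)⁻¹) =
      ENNReal.ofReal (∑' n : ℕ, (aCount (d + 1) (n + 1) : ℝ) * x ^ n) := by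
  set X := ENNReal.ofReal x
  have hfactor : ∀ s : Finset (TreeT d), ENNReal.ofReal (∏ t ∈ s, (1 - x ^ treeSize d t)⁻¹) =
      ∏ t ∈ s, (1 - X ^ treeSize d t)⁻¹ := fun s => by
    rw [ENNReal.ofReal_prod_of_nonneg fun t _ =>
      inv_nonneg.2 (sub_nonneg.2 (pow_le_one₀ hx0 hx1.le))]
    refine Finset.prod_congr rfl fun t _ => ?_
    rw [ENNReal.ofReal_inv_of_pos (sub_pos.2 (pow_lt_one₀ hx0 hx1 (treeSize_pos d t).ne')),
      ENNReal.ofReal_sub _ (pow_nonneg hx0 _), ENNReal.ofReal_one, ENNReal.ofReal_pow hx0]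
  have hweight : ∀ m : TreeT (d + 1),
      X ^ (treeSize (d + 1) m - 1) = (Multiset.map (fun t => X ^ treeSize d t) m).prod := by
    intro m
    show X ^ (1 + _ - 1) = _
    rw [Nat.add_sub_cancel_left]
    induction (m : Multiset (TreeT d)) using Multiset.induction_on with
    | empty => simp
    | cons t m ih => simp [pow_add, ih]
  have hgroup := hasSum_aCount_nsmul (d := d + 1) (c := fun n => X ^ (n - 1))
    (ENNReal.summable.hasSum.congr_fun hweight)
  calc ⨆ s : Finset (TreeT d), ENNReal.ofReal (∏ t ∈ s, (1 - x ^ treeSize d t)⁻¹)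
      = ∑' m : Multiset (TreeT d), (m.map fun t => X ^ treeSize d t).prod := by
        rw [ENNReal.tsum_multiset_prod_map]; exact iSup_congr hfactor
    _ = ∑' n, aCount (d + 1) (n + 1) • X ^ n := hgroup.tsum_eq.symm
    _ = ENNReal.ofReal (∑' n : ℕ, (aCount (d + 1) (n + 1) : ℝ) * x ^ n) := by
        rw [ENNReal.ofReal_tsum_of_nonneg (fun n => by positivity) hsum]
        simp [ENNReal.ofReal_mul, ENNReal.ofReal_pow hx0, nsmul_eq_mul, X]

theorem hasSum_aCount_log_series {d : ℕ} {x : ℝ} (hx0 : 0 ≤ x) (hx1 : x < 1) {ℓ : ℝ}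
    (h : HasSum (fun t : TreeT d => -Real.log (1 - x ^ treeSize d t)) ℓ) :
    (∀ j : ℕ, Summable fun n : ℕ => (aCount d (n + 1) : ℝ) * x ^ ((j + 1) * (n + 1))) ∧
      HasSum (fun j : ℕ => (1 / (j + 1) : ℝ) *
        ∑' n : ℕ, (aCount d (n + 1) : ℝ) * x ^ ((j + 1) * (n + 1))) ℓ := by
  obtain ⟨hpow, hlog⟩ := hasSum_tsum_pow_div_of_hasSum_neg_log
    (fun t => pow_nonneg hx0 (treeSize d t)) (fun t => pow_lt_one₀ hx0 hx1 (treeSize_pos d t).ne') h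
  have hgroup : ∀ j : ℕ, HasSum (fun n : ℕ => (aCount d (n + 1) : ℝ) * x ^ ((j + 1) * (n + 1)))
      (∑' t : TreeT d, (x ^ treeSize d t) ^ (j + 1)) := fun j => by
    simpa only [nsmul_eq_mul] using hasSum_aCount_nsmul (c := fun n => x ^ ((j + 1) * n))
      ((hpow j).hasSum.congr_fun fun t => pow_mul' x _ _)
  refine ⟨fun j => (hgroup j).summable, hlog.congr_fun fun j => ?_⟩
  rw [tsum_div_const, (hgroup j).tsum_eq, one_div_mul_eq_div]

/-- The recursion `φ_{d+1}(x) = exp( Σ_{j≥1} (x^j/j) φ_d(x^j) )` for the generating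
functions `φ_d(x) = Σ_{n≥1} A_{d,n} x^{n-1}` of the numbers of trees of depth at most `d`.
Here the sum `Σ_{n≥1} A_{d,n} x^{jn}` is written as `Σ_{n : ℕ} A_{d,n+1} x^{j(n+1)}`
and `Σ_{j≥1}` as `Σ_{j : ℕ}` with `j` shifted by one. -/
theorem phi_recursion (d : ℕ) (x : ℝ) (hx0 : 0 ≤ x) (hx1 : x < 1)
    (hsum : Summable fun n : ℕ => (aCount (d + 1) (n + 1) : ℝ) * x ^ n) :
    (∀ j : ℕ, 1 ≤ j → Summable fun n : ℕ => (aCount d (n + 1) : ℝ) * x ^ (j * (n + 1))) ∧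
    (Summable fun j : ℕ =>
      (1 / (j + 1) : ℝ) * ∑' n : ℕ, (aCount d (n + 1) : ℝ) * x ^ ((j + 1) * (n + 1))) ∧
    ∑' n : ℕ, (aCount (d + 1) (n + 1) : ℝ) * x ^ n =
      Real.exp (∑' j : ℕ,
        (1 / (j + 1) : ℝ) * ∑' n : ℕ, (aCount d (n + 1) : ℝ) * x ^ ((j + 1) * (n + 1))) := by
  have hfactor : ∀ t : TreeT d, 1 ≤ (1 - x ^ treeSize d t)⁻¹ := fun t =>
    (one_le_inv₀ (sub_pos.2 (pow_lt_one₀ hx0 hx1 (treeSize_pos d t).ne'))).2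
      (sub_le_self _ (pow_nonneg hx0 _))
  have hprod :=
    hasProd_of_iSup_ofReal hfactor (iSup_ofReal_prod_inv_one_sub_pow_treeSize hx0 hx1 hsum)
  have hpos := zero_lt_one.trans_le
    (ge_of_tendsto' hprod fun s => Finset.one_le_prod fun t _ => hfactor t)
  have hlog := Real.hasSum_log_of_hasProd (fun t => zero_lt_one.trans_le (hfactor t)) hpos.ne' hprod
  simp only [Real.log_inv] at hlog
  obtain ⟨hcol, hser⟩ := hasSum_aCount_log_series hx0 hx1 hlog
  refine ⟨fun j hj => ?_, hser.summable, by rw [hser.tsum_eq, Real.exp_log hpos]⟩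
  obtain ⟨k, rfl⟩ := Nat.exists_eq_add_of_le' hj
  exact hcol k
end

section
/- Let n ≥ 1, let A₁ and Z be symmetric real n×n matrices, let σ ≥ 0, set A₂ := A₁ + σZ, and let X be an n×n doubly stochastic matrix. Then ‖A₁X − XA₂‖_F² ≥ σ²‖Z‖_F² − 2σ·n·max_{i≠j} |(A₁Z − ZA₁)(i,j)| − 2σ²‖Z²‖_F·‖I − X‖_F, where I is the n×n identity matrix and the maximum is over pairs of distinct indices i, j ∈ {1,…,n}. -/
open Matrix

/-- Squared Frobenius norm. -/
noncomputable def frob2 {n : ℕ} (M : Matrix (Fin n) (Fin n) ℝ) : ℝ :=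
  ∑ i, ∑ j, (M i j) ^ 2

/-- Frobenius norm. -/
noncomputable def frobNorm {n : ℕ} (M : Matrix (Fin n) (Fin n) ℝ) : ℝ :=
  Real.sqrt (frob2 M)

/-- Maximum of `|M(i,j)|` over pairs of distinct indices (`0` when no such pair exists). -/
noncomputable def maxOffDiag {n : ℕ} (M : Matrix (Fin n) (Fin n) ℝ) : ℝ :=
  ⨆ p : {q : Fin n × Fin n // q.1 ≠ q.2}, |M p.1.1 p.1.2|

/-- Doubly stochastic matrices. -/
def Birkhoff (n : ℕ) : Set (Matrix (Fin n) (Fin n) ℝ) :=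
  {X | (∀ i j, 0 ≤ X i j) ∧ (∀ i, ∑ j, X i j = 1) ∧ (∀ j, ∑ i, X i j = 1)}

/-! Write `M := A₁X − XA₂` and `K := A₁Z − ZA₁`. Expanding `0 ≤ ‖M + σZ‖_F²` gives
`‖M‖_F² ≥ −2σ⟨M, Z⟩ − σ²‖Z‖_F²`. By symmetry and cyclicity of the trace,
`⟨M, Z⟩ = ⟨X, A₁Z − ZA₂⟩ = ⟨X, K⟩ − σ‖Z‖_F² + σ⟨I − X, Z²⟩`, using `tr Z² = ‖Z‖_F²`.
Since `K` has zero diagonal and `X` is nonnegative with unit row sums, `⟨X, K⟩ ≤ n max_{i≠j} |K i j|`,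
and Cauchy–Schwarz bounds `⟨I − X, Z²⟩` by `‖I − X‖_F ‖Z²‖_F`. -/

section Frobenius

variable {n : ℕ}

lemma frob2_nonneg (M : Matrix (Fin n) (Fin n) ℝ) : 0 ≤ frob2 M :=
  Finset.sum_nonneg fun _ _ => Finset.sum_nonneg fun _ _ => sq_nonneg _

lemma trace_transpose_mul_eq_sum (A B : Matrix (Fin n) (Fin n) ℝ) :
    (Aᵀ * B).trace = ∑ i, ∑ j, A i j * B i j := by
  simp only [trace, diag, mul_apply, transpose_apply]
  exact Finset.sum_comm

lemma frob2_eq_trace (M : Matrix (Fin n) (Fin n) ℝ) : frob2 M = (Mᵀ * M).trace := by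
  simp only [trace_transpose_mul_eq_sum, frob2, pow_two]

lemma frob2_add_smul (M Z : Matrix (Fin n) (Fin n) ℝ) (s : ℝ) :
    frob2 (M + s • Z) = frob2 M + 2 * s * (Mᵀ * Z).trace + s ^ 2 * frob2 Z := by
  have hsymm : (Zᵀ * M).trace = (Mᵀ * Z).trace := by
    rw [← trace_transpose, transpose_mul, transpose_transpose]
  simp only [frob2_eq_trace, transpose_add, transpose_smul, add_mul, mul_add, Matrix.smul_mul,
    Matrix.mul_smul, trace_add, trace_smul, smul_eq_mul, hsymm]
  ring

lemma trace_transpose_mul_le_frobNorm (A B : Matrix (Fin n) (Fin n) ℝ) :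
    (Aᵀ * B).trace ≤ frobNorm A * frobNorm B := by
  have h := Real.sum_mul_le_sqrt_mul_sqrt Finset.univ (fun p : Fin n × Fin n => A p.1 p.2)
    (fun p => B p.1 p.2)
  simp only [Fintype.sum_prod_type] at h
  rwa [trace_transpose_mul_eq_sum]

lemma abs_le_maxOffDiag (M : Matrix (Fin n) (Fin n) ℝ) {i j : Fin n} (hij : i ≠ j) :
    |M i j| ≤ maxOffDiag M :=
  le_ciSup (f := fun p : {q : Fin n × Fin n // q.1 ≠ q.2} => |M p.1.1 p.1.2|)
    (Set.finite_range _).bddAbove ⟨(i, j), hij⟩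

lemma maxOffDiag_nonneg (M : Matrix (Fin n) (Fin n) ℝ) : 0 ≤ maxOffDiag M :=
  Real.iSup_nonneg fun _ => abs_nonneg _

lemma trace_transpose_mul_le_maxOffDiag {X K : Matrix (Fin n) (Fin n) ℝ}
    (hX₀ : ∀ i j, 0 ≤ X i j) (hrow : ∀ i, ∑ j, X i j = 1) (hK : ∀ i, K i i = 0) :
    (Xᵀ * K).trace ≤ n * maxOffDiag K := by
  have hentry : ∀ i j, X i j * K i j ≤ X i j * maxOffDiag K := by
    intro i j
    rcases eq_or_ne i j with rfl | hij
    · rw [hK, mul_zero]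
      exact mul_nonneg (hX₀ i i) (maxOffDiag_nonneg K)
    · exact mul_le_mul_of_nonneg_left ((le_abs_self _).trans (abs_le_maxOffDiag K hij)) (hX₀ i j)
  calc (Xᵀ * K).trace = ∑ i, ∑ j, X i j * K i j := trace_transpose_mul_eq_sum X K
    _ ≤ ∑ i, ∑ j, X i j * maxOffDiag K :=
        Finset.sum_le_sum fun i _ => Finset.sum_le_sum fun j _ => hentry i j
    _ = n * maxOffDiag K := by simp [← Finset.sum_mul, hrow]

end Frobenius

section Symmetric

variable {ι α : Type*} [Fintype ι] [CommRing α]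

lemma commutator_apply_self_of_isSymm {A Z : Matrix ι ι α} (hA : A.IsSymm) (hZ : Z.IsSymm)
    (i : ι) : (A * Z - Z * A) i i = 0 := by
  rw [Matrix.sub_apply, sub_eq_zero, ← transpose_apply (A * Z), transpose_mul, hA.eq, hZ.eq]

lemma trace_transpose_sub_mul {A₁ A₂ : Matrix ι ι α} (hA₁ : A₁.IsSymm) (hA₂ : A₂.IsSymm)
    (X Z : Matrix ι ι α) :
    ((A₁ * X - X * A₂)ᵀ * Z).trace = (Xᵀ * (A₁ * Z - Z * A₂)).trace := by
  rw [transpose_sub, transpose_mul, transpose_mul, hA₁.eq, hA₂.eq, sub_mul, mul_sub,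
    trace_sub, trace_sub, Matrix.mul_assoc, Matrix.mul_assoc, trace_mul_comm A₂, Matrix.mul_assoc]

end Symmetric

theorem frob_lower_bound_general (n : ℕ) (A₁ Z : Matrix (Fin n) (Fin n) ℝ)
    (hA₁ : A₁.IsSymm) (hZ : Z.IsSymm) (σ : ℝ) (hσ : 0 ≤ σ)
    (A₂ : Matrix (Fin n) (Fin n) ℝ) (hA₂ : A₂ = A₁ + σ • Z)
    (X : Matrix (Fin n) (Fin n) ℝ) (hX : X ∈ Birkhoff n) :
    σ ^ 2 * frob2 Z - 2 * σ * n * maxOffDiag (A₁ * Z - Z * A₁)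
        - 2 * σ ^ 2 * frobNorm (Z * Z) * frobNorm (1 - X)
      ≤ frob2 (A₁ * X - X * A₂) := by
  obtain ⟨hX₀, hrow, -⟩ := hX
  set M := A₁ * X - X * A₂
  set K := A₁ * Z - Z * A₁
  have hA₂symm : A₂.IsSymm := hA₂ ▸ hA₁.add (hZ.smul σ)
  have hinner : (Mᵀ * Z).trace
      = (Xᵀ * K).trace - σ * frob2 Z + σ * ((1 - X)ᵀ * (Z * Z)).trace := by
    rw [trace_transpose_sub_mul hA₁ hA₂symm, hA₂, frob2_eq_trace, hZ.eq]
    simp only [mul_add, Matrix.mul_smul, transpose_sub, transpose_one, sub_mul, one_mul, mul_sub,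
      trace_add, trace_sub, trace_smul, smul_eq_mul, K]
    ring
  have hexpand := frob2_add_smul M Z σ
  rw [hinner] at hexpand
  have hK := trace_transpose_mul_le_maxOffDiag hX₀ hrow (commutator_apply_self_of_isSymm hA₁ hZ)
  have hCS := trace_transpose_mul_le_frobNorm (1 - X) (Z * Z)
  linarith [frob2_nonneg (M + σ • Z), mul_le_mul_of_nonneg_left hK hσ,
    mul_le_mul_of_nonneg_left hCS (sq_nonneg σ)]

/-- For symmetric `A₁`, `Z`, `σ ≥ 0`, `A₂ = A₁ + σZ` and doubly stochastic `X`: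
`‖A₁X − XA₂‖_F² ≥ σ²‖Z‖_F² − 2σ n max_{i≠j}|(A₁Z − ZA₁)(i,j)| − 2σ²‖Z²‖_F ‖I − X‖_F`. -/
theorem frob_lower_bound (n : ℕ) (hn : 1 ≤ n) (A₁ Z : Matrix (Fin n) (Fin n) ℝ)
    (hA₁ : A₁.IsSymm) (hZ : Z.IsSymm) (σ : ℝ) (hσ : 0 ≤ σ)
    (A₂ : Matrix (Fin n) (Fin n) ℝ) (hA₂ : A₂ = A₁ + σ • Z)
    (X : Matrix (Fin n) (Fin n) ℝ) (hX : X ∈ Birkhoff n) :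
    σ ^ 2 * frob2 Z - 2 * σ * n * maxOffDiag (A₁ * Z - Z * A₁)
        - 2 * σ ^ 2 * frobNorm (Z * Z) * frobNorm (1 - X)
      ≤ frob2 (A₁ * X - X * A₂) :=
  frob_lower_bound_general n A₁ Z hA₁ hZ σ hσ A₂ hA₂ X hX
end

section
/- Fix ε > 0. For each n ≥ 2, let A₁ and Z be independent GOE(n) matrices. Then the probability that max_{i≠j} |(A₁Z − ZA₁)(i,j)| ≤ n^{ε−1/2}, the maximum being over pairs of distinct indices i, j ∈ {1,…,n}, tends to 1 as n → ∞. -/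
open MeasureTheory ProbabilityTheory Matrix Filter
open scoped ENNReal NNReal Topology

instance matrixMeasurableSpace {n : ℕ} : MeasurableSpace (Matrix (Fin n) (Fin n) ℝ) :=
  inferInstanceAs (MeasurableSpace (Fin n → Fin n → ℝ))

/-- The GOE(n) measure on symmetric real n×n matrices: pushforward of a product of Gaussians
(variance 2/n on the diagonal, 1/n off-diagonal) under the symmetrization map. -/
noncomputable def goeMeasure (n : ℕ) : Measure (Matrix (Fin n) (Fin n) ℝ) :=
  Measure.map
    (fun x : {p : Fin n × Fin n // p.1 ≤ p.2} → ℝ =>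
      Matrix.of fun i j =>
        if h : i ≤ j then x ⟨(i, j), h⟩ else x ⟨(j, i), (le_total i j).resolve_left h⟩)
    (Measure.pi fun p =>
      gaussianReal 0 (if p.1.1 = p.1.2 then (2 / n : ℝ≥0) else (1 / n : ℝ≥0)))

/-!
Conditionally on `Z`, the entry `(A₁Z − ZA₁)(i,j) = ∑ₖ Z(k,j) A₁(i,k) − ∑ₖ Z(i,k) A₁(k,j)` is a
linear form in the independent Gaussian coordinates of `A₁`, hence sub-Gaussian with variance
proxy `4 n (max |Z|)² (2/n) = 8 (max |Z|)²`. On the event `max |Z| ≤ n^((ε-1)/2)`, whose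
complement has probability at most `2 n² exp(-n^ε/4)`, the Chernoff bound at level `n^(ε-1/2)`
gives `2 exp(-n^ε/16)` per entry, and a union bound over the `n²` entries leaves a failure
probability `O(n² exp(-n^ε/16)) → 0`.
-/

lemma tendsto_pow_mul_exp_neg_mul_rpow_atTop_nhds_zero (k : ℕ) {ε c : ℝ} (hε : 0 < ε)
    (hc : 0 < c) : Tendsto (fun x : ℝ ↦ x ^ k * Real.exp (-c * x ^ ε)) atTop (𝓝 0) := by
  refine ((tendsto_rpow_mul_exp_neg_mul_atTop_nhds_zero (k / ε) c hc).comp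
    (tendsto_rpow_atTop hε)).congr' ?_
  filter_upwards [eventually_ge_atTop 0] with x hx
  rw [Function.comp_apply, ← Real.rpow_mul hx, mul_div_cancel₀ _ hε.ne', Real.rpow_natCast]

lemma MeasureTheory.measureReal_prod_le_of_forall_slice_le {α β : Type*} [MeasurableSpace α]
    [MeasurableSpace β] {μ : Measure α} {ν : Measure β} [IsFiniteMeasure μ]
    [IsProbabilityMeasure ν] {E : Set (α × β)} (hE : MeasurableSet E) {b : ℝ} (hb : 0 ≤ b)
    (h : ∀ y, μ.real ((fun x ↦ (x, y)) ⁻¹' E) ≤ b) : (μ.prod ν).real E ≤ b := by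
  refine ENNReal.toReal_le_of_le_ofReal hb ?_
  calc μ.prod ν E = ∫⁻ y, μ ((fun x ↦ (x, y)) ⁻¹' E) ∂ν := Measure.prod_apply_symm hE
    _ ≤ ∫⁻ _, ENNReal.ofReal b ∂ν :=
        lintegral_mono fun y ↦ (ENNReal.le_ofReal_iff_toReal_le (measure_ne_top _ _) hb).2 (h y)
    _ = ENNReal.ofReal b := by simp

lemma MeasureTheory.measureReal_iUnion_le_card_mul {α ι : Type*} [MeasurableSpace α]
    {μ : Measure α} [Fintype ι] {s : ι → Set α} {b : ℝ} (h : ∀ i, μ.real (s i) ≤ b) :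
    μ.real (⋃ i, s i) ≤ Fintype.card ι * b :=
  (measureReal_iUnion_fintype_le s).trans
    (by simpa using Finset.sum_le_card_nsmul Finset.univ _ b fun i _ ↦ h i)

lemma MeasureTheory.one_sub_measureReal_le_of_compl_subset {α : Type*} [MeasurableSpace α]
    {μ : Measure α} [IsProbabilityMeasure μ] {s t : Set α} (h : sᶜ ⊆ t) :
    1 - μ.real t ≤ μ.real s := by
  have := measureReal_union_le (μ := μ) s sᶜ
  rw [Set.union_compl_self, probReal_univ] at this
  linarith [measureReal_mono (μ := μ) h]

namespace ProbabilityTheory.HasSubgaussianMGF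

variable {Ω : Type*} {mΩ : MeasurableSpace Ω} {μ : Measure Ω} {X Y : Ω → ℝ} {c d : ℝ≥0}

lemma mono (h : HasSubgaussianMGF X c μ) (hcd : c ≤ d) : HasSubgaussianMGF X d μ where
  integrable_exp_mul := h.integrable_exp_mul
  mgf_le t := (h.mgf_le t).trans (Real.exp_le_exp.2 (by gcongr))

/-- No independence is assumed, hence `4 * c` rather than `2 * c`. -/
lemma sub (hX : HasSubgaussianMGF X c μ) (hY : HasSubgaussianMGF Y c μ) :
    HasSubgaussianMGF (fun ω ↦ X ω - Y ω) (4 * c) μ := by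
  have h := hX.add hY.neg
  rw [← two_mul, mul_pow, NNReal.sq_sqrt] at h
  norm_num at h
  simpa [sub_eq_add_neg] using h

lemma measureReal_abs_ge_le (h : HasSubgaussianMGF X c μ) {ε : ℝ} (hε : 0 ≤ ε) :
    μ.real {ω | ε ≤ |X ω|} ≤ 2 * Real.exp (-ε ^ 2 / (2 * c)) := by
  have hfin : IsFiniteMeasure μ :=
    (integrable_const_iff_isFiniteMeasure one_ne_zero).1 (by simpa using h.integrable_exp_mul 0)
  calc μ.real {ω | ε ≤ |X ω|} ≤ μ.real ({ω | ε ≤ X ω} ∪ {ω | ε ≤ (-X) ω}) :=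
        measureReal_mono fun ω (hω : ε ≤ |X ω|) ↦ le_abs.1 hω
    _ ≤ _ := (measureReal_union_le _ _).trans
        (by linarith [h.measure_ge_le hε, h.neg.measure_ge_le hε])

end ProbabilityTheory.HasSubgaussianMGF

lemma ProbabilityTheory.hasSubgaussianMGF_gaussianReal (v : ℝ≥0) :
    HasSubgaussianMGF id v (gaussianReal 0 v) where
  integrable_exp_mul := integrable_exp_mul_gaussianReal
  mgf_le t := by simp [mgf_id_gaussianReal]

lemma ProbabilityTheory.hasSubgaussianMGF_eval_pi_gaussianReal {ι : Type*} [Fintype ι]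
    (σ : ι → ℝ≥0) (i : ι) :
    HasSubgaussianMGF (fun x ↦ x i) (σ i) (Measure.pi fun i ↦ gaussianReal 0 (σ i)) := by
  classical
  rw [← HasSubgaussianMGF.id_map_iff (measurable_pi_apply i).aemeasurable]
  simpa [Measure.pi_map_eval] using hasSubgaussianMGF_gaussianReal (σ i)

lemma ProbabilityTheory.hasSubgaussianMGF_sum_mul_pi_gaussianReal {ι κ : Type*} [Fintype ι]
    [Fintype κ] {σ : ι → ℝ≥0} {f : κ → ι} (hf : f.Injective) (a : κ → ℝ) {v : ℝ≥0}
    (hv : ∑ k, a k ^ 2 * (σ (f k) : ℝ) ≤ v) :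
    HasSubgaussianMGF (fun x ↦ ∑ k, a k * x (f k)) v
      (Measure.pi fun i ↦ gaussianReal 0 (σ i)) := by
  have hindep : iIndepFun (fun k (x : ι → ℝ) ↦ a k * x (f k))
      (Measure.pi fun i ↦ gaussianReal 0 (σ i)) := by
    have hcoords : iIndepFun (fun i (x : ι → ℝ) ↦ x i)
        (Measure.pi fun i ↦ gaussianReal 0 (σ i)) :=
      iIndepFun_pi (X := fun _ ↦ id) fun _ ↦ aemeasurable_id
    exact (hcoords.precomp hf).comp (fun k (y : ℝ) ↦ a k * y) fun _ ↦ measurable_const_mul _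
  refine (HasSubgaussianMGF.sum_of_iIndepFun hindep (s := Finset.univ)
    fun k _ ↦ (hasSubgaussianMGF_eval_pi_gaussianReal σ (f k)).const_mul (a k)).mono ?_
  rw [← NNReal.coe_le_coe, NNReal.coe_sum]
  exact hv

namespace GOE

variable {n : ℕ}

abbrev Index (n : ℕ) := {p : Fin n × Fin n // p.1 ≤ p.2}

def index (a b : Fin n) : Index n :=
  if h : a ≤ b then ⟨(a, b), h⟩ else ⟨(b, a), (le_total a b).resolve_left h⟩

lemma index_comm (a b : Fin n) : index a b = index b a := by
  unfold index
  split_ifs <;> simp_all [Fin.ext_iff] <;> omega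

lemma index_injective (a : Fin n) : (index a).Injective := by
  intro k l h
  unfold index at h
  split_ifs at h <;> simp_all [Fin.ext_iff]

noncomputable def symMat (x : Index n → ℝ) : Matrix (Fin n) (Fin n) ℝ :=
  Matrix.of fun i j =>
    if h : i ≤ j then x ⟨(i, j), h⟩ else x ⟨(j, i), (le_total i j).resolve_left h⟩

lemma symMat_apply (x : Index n → ℝ) (a b : Fin n) : symMat x a b = x (index a b) := by
  unfold symMat index
  by_cases h : a ≤ b <;> simp [h]

lemma commutator_symMat_apply (x : Index n → ℝ) (Z : Matrix (Fin n) (Fin n) ℝ) (i j : Fin n) :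
    (symMat x * Z - Z * symMat x) i j
      = ∑ k, Z k j * x (index i k) - ∑ k, Z i k * x (index j k) := by
  simp [mul_apply, symMat_apply, index_comm _ j, mul_comm]

lemma hasSubgaussianMGF_commutator_symMat_apply {σ : Index n → ℝ≥0} {s M : ℝ≥0}
    (hσ : ∀ p, σ p ≤ s) {Z : Matrix (Fin n) (Fin n) ℝ} (hZ : ∀ a b, |Z a b| ≤ M) (i j : Fin n) :
    HasSubgaussianMGF (fun x ↦ (symMat x * Z - Z * symMat x) i j) (4 * (n * M ^ 2 * s))
      (Measure.pi fun p ↦ gaussianReal 0 (σ p)) := by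
  have hrow (a : Fin n → ℝ) (ha : ∀ k, |a k| ≤ M) (l : Fin n) :
      HasSubgaussianMGF (fun x ↦ ∑ k, a k * x (index l k)) (n * M ^ 2 * s)
        (Measure.pi fun p ↦ gaussianReal 0 (σ p)) := by
    refine hasSubgaussianMGF_sum_mul_pi_gaussianReal (index_injective l) a ?_
    calc ∑ k, a k ^ 2 * (σ (index l k) : ℝ) ≤ ∑ _k : Fin n, (M : ℝ) ^ 2 * s := by
          refine Finset.sum_le_sum fun k _ ↦
            mul_le_mul ?_ (mod_cast hσ _) (by positivity) (by positivity)
          exact sq_le_sq' (abs_le.1 (ha k)).1 (abs_le.1 (ha k)).2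
      _ = _ := by simp [mul_assoc]
  simp_rw [commutator_symMat_apply]
  -- the two sums share the coordinate `index i j`, so only the dependent `sub` applies
  exact (hrow _ (hZ · j) i).sub (hrow _ (hZ i ·) j)

noncomputable def entryVariance (n : ℕ) (p : Index n) : ℝ≥0 :=
  if p.1.1 = p.1.2 then 2 / n else 1 / n

lemma entryVariance_le (p : Index n) : entryVariance n p ≤ 2 / n := by
  unfold entryVariance
  split_ifs
  · rfl
  · gcongr
    norm_num

noncomputable def coordMeasure (n : ℕ) : Measure (Index n → ℝ) :=
  Measure.pi fun p ↦ gaussianReal 0 (entryVariance n p)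

lemma goeMeasure_eq_map : goeMeasure n = (coordMeasure n).map symMat := rfl

lemma measurable_matrix_apply (a b : Fin n) :
    Measurable fun A : Matrix (Fin n) (Fin n) ℝ ↦ A a b :=
  (measurable_pi_apply b).comp (measurable_pi_apply a)

lemma measurable_symMat : Measurable (symMat (n := n)) :=
  measurable_pi_lambda _ fun a ↦ measurable_pi_lambda _ fun b ↦ by
    simpa only [symMat_apply] using measurable_pi_apply (index a b)

instance : IsProbabilityMeasure (goeMeasure n) := by
  rw [goeMeasure_eq_map, coordMeasure]
  exact Measure.isProbabilityMeasure_map measurable_symMat.aemeasurable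

lemma measurable_commutator_apply (i j : Fin n) :
    Measurable fun p : Matrix (Fin n) (Fin n) ℝ × Matrix (Fin n) (Fin n) ℝ ↦
      (p.1 * p.2 - p.2 * p.1) i j := by
  simp only [Matrix.sub_apply, mul_apply]
  refine (Finset.measurable_sum _ fun k _ ↦ ?_).sub (Finset.measurable_sum _ fun k _ ↦ ?_) <;>
    exact ((measurable_matrix_apply _ _).comp (by fun_prop)).mul
      ((measurable_matrix_apply _ _).comp (by fun_prop))

lemma measureReal_abs_apply_ge_le (a b : Fin n) {M : ℝ} (hM : 0 ≤ M) :
    (goeMeasure n).real {Z | M ≤ |Z a b|} ≤ 2 * Real.exp (-(n * M ^ 2) / 4) := by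
  have hn : (n : ℝ) ≠ 0 := by exact_mod_cast (Fin.pos a).ne'
  have hpre : symMat ⁻¹' {Z | M ≤ |Z a b|} = {x | M ≤ |x (index a b)|} := by
    ext x
    simp only [Set.mem_preimage, Set.mem_ofPred_eq, symMat_apply]
  have hexp : -M ^ 2 / (2 * ((2 / n : ℝ≥0) : ℝ)) = -(n * M ^ 2) / 4 := by
    rw [NNReal.coe_div]
    push_cast
    field_simp
    ring
  rw [goeMeasure_eq_map, map_measureReal_apply measurable_symMat
    (measurableSet_le measurable_const (measurable_matrix_apply a b).abs), hpre, ← hexp]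
  exact ((hasSubgaussianMGF_eval_pi_gaussianReal (entryVariance n) (index a b)).mono
    (entryVariance_le _)).measureReal_abs_ge_le hM

lemma measureReal_abs_commutator_apply_ge_le {Z : Matrix (Fin n) (Fin n) ℝ} {M : ℝ} (hM : 0 ≤ M)
    (hZ : ∀ a b, |Z a b| ≤ M) (i j : Fin n) {t : ℝ} (ht : 0 ≤ t) :
    (goeMeasure n).real {A | t ≤ |(A * Z - Z * A) i j|}
      ≤ 2 * Real.exp (-t ^ 2 / (16 * M ^ 2)) := by
  have hn : (n : ℝ) ≠ 0 := by exact_mod_cast (Fin.pos i).ne'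
  lift M to ℝ≥0 using hM
  have hmeas : MeasurableSet {A : Matrix (Fin n) (Fin n) ℝ | t ≤ |(A * Z - Z * A) i j|} :=
    measurableSet_le measurable_const
      ((measurable_commutator_apply i j).comp measurable_prodMk_right).abs
  have hexp :
      -t ^ 2 / (2 * ((4 * (n * M ^ 2 * (2 / n)) : ℝ≥0) : ℝ)) = -t ^ 2 / (16 * M ^ 2) := by
    rw [NNReal.coe_mul, NNReal.coe_mul, NNReal.coe_mul, NNReal.coe_div]
    push_cast
    field_simp
    ring
  rw [goeMeasure_eq_map, map_measureReal_apply measurable_symMat hmeas, ← hexp]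
  exact (hasSubgaussianMGF_commutator_symMat_apply entryVariance_le hZ i j).measureReal_abs_ge_le
    ht

lemma measureReal_exists_commutator_apply_gt_le {t M : ℝ} (ht : 0 ≤ t) (hM : 0 ≤ M) :
    ((goeMeasure n).prod (goeMeasure n)).real
        {p | ∃ i j, t < |(p.1 * p.2 - p.2 * p.1) i j|}
      ≤ n ^ 2 * (2 * Real.exp (-t ^ 2 / (16 * M ^ 2)))
        + n ^ 2 * (2 * Real.exp (-(n * M ^ 2) / 4)) := by
  have hcover : {p : Matrix (Fin n) (Fin n) ℝ × Matrix (Fin n) (Fin n) ℝ |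
        ∃ i j, t < |(p.1 * p.2 - p.2 * p.1) i j|}
      ⊆ (⋃ ij : Fin n × Fin n,
          {p | t < |(p.1 * p.2 - p.2 * p.1) ij.1 ij.2| ∧ ∀ a b, |p.2 a b| ≤ M})
        ∪ Set.univ ×ˢ ⋃ ab : Fin n × Fin n, {Z | M ≤ |Z ab.1 ab.2|} := by
    rintro p ⟨i, j, hij⟩
    by_cases hZ : ∀ a b, |p.2 a b| ≤ M
    · exact Or.inl (Set.mem_iUnion.2 ⟨(i, j), hij, hZ⟩)
    · simp only [not_forall, not_le] at hZ
      obtain ⟨a, b, hab⟩ := hZ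
      exact Or.inr ⟨trivial, Set.mem_iUnion.2 ⟨(a, b), hab.le⟩⟩
  have hcard : (Fintype.card (Fin n × Fin n) : ℝ) = n ^ 2 := by simp [sq]
  refine (measureReal_mono hcover).trans ((measureReal_union_le _ _).trans (add_le_add ?_ ?_))
  · rw [← hcard]
    refine measureReal_iUnion_le_card_mul fun ij ↦ ?_
    refine measureReal_prod_le_of_forall_slice_le ?_ (by positivity) fun Z ↦ ?_
    · simp only [Set.ofPred_and, Set.ofPred_forall]
      exact (measurableSet_lt measurable_const (measurable_commutator_apply _ _).abs).inter
        (.iInter fun a ↦ .iInter fun b ↦ measurableSet_le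
          ((measurable_matrix_apply a b).comp measurable_snd).abs measurable_const)
    by_cases hZ : ∀ a b, |Z a b| ≤ M
    · refine (measureReal_mono fun A (hA : _ ∧ _) ↦ hA.1.le).trans ?_
      exact measureReal_abs_commutator_apply_ge_le hM hZ ij.1 ij.2 ht
    · have hempty : (fun A ↦ (A, Z)) ⁻¹'
          {p : Matrix (Fin n) (Fin n) ℝ × Matrix (Fin n) (Fin n) ℝ |
            t < |(p.1 * p.2 - p.2 * p.1) ij.1 ij.2| ∧ ∀ a b, |p.2 a b| ≤ M} = ∅ :=
        Set.eq_empty_of_forall_notMem fun A hA ↦ hZ hA.2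
      rw [hempty, measureReal_empty]
      positivity
  · rw [measureReal_prod_prod, probReal_univ, one_mul, ← hcard]
    exact measureReal_iUnion_le_card_mul fun ab ↦ measureReal_abs_apply_ge_le ab.1 ab.2 hM

lemma one_sub_le_measureReal_maxOffDiag_commutator_le {ε : ℝ} (hn : n ≠ 0) :
    1 - 4 * ((n : ℝ) ^ 2 * Real.exp (-(1 / 16) * (n : ℝ) ^ ε))
      ≤ ((goeMeasure n).prod (goeMeasure n)).real
          {p | maxOffDiag (p.1 * p.2 - p.2 * p.1) ≤ (n : ℝ) ^ (ε - 1 / 2)} := by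
  have hn_pos : (0 : ℝ) < n := by positivity
  set u := (n : ℝ) ^ ε
  have hu_pos : 0 < u := by positivity
  set t := (n : ℝ) ^ (ε - 1 / 2)
  -- the truncation level for `Z`, chosen so that `t² / M² = n M² = n^ε`
  set M := √(u / n)
  have ht_sq : t ^ 2 = u ^ 2 / n := by
    rw [show t = (n : ℝ) ^ (ε - 1 / 2) from rfl, Real.rpow_sub hn_pos, ← Real.sqrt_eq_rpow,
      div_pow, Real.sq_sqrt hn_pos.le]
  have hM_sq : M ^ 2 = u / n := Real.sq_sqrt (by positivity)
  have hbad : ((goeMeasure n).prod (goeMeasure n)).real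
      {p | ∃ i j, t < |(p.1 * p.2 - p.2 * p.1) i j|}
        ≤ 4 * ((n : ℝ) ^ 2 * Real.exp (-(1 / 16) * u)) := by
    refine (measureReal_exists_commutator_apply_gt_le (t := t) (M := M) (by positivity)
      (by positivity)).trans ?_
    have h16 : -t ^ 2 / (16 * M ^ 2) = -(1 / 16) * u := by
      rw [ht_sq, hM_sq]
      field_simp
    have h4 : -(n * M ^ 2) / 4 ≤ -(1 / 16) * u := by
      rw [hM_sq]
      field_simp
      linarith
    calc _ ≤ (n : ℝ) ^ 2 * (2 * Real.exp (-(1 / 16) * u))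
          + n ^ 2 * (2 * Real.exp (-(1 / 16) * u)) := by rw [h16]; gcongr
      _ = _ := by ring
  have hcompl : {p : Matrix (Fin n) (Fin n) ℝ × Matrix (Fin n) (Fin n) ℝ |
      maxOffDiag (p.1 * p.2 - p.2 * p.1) ≤ t}ᶜ
        ⊆ {p | ∃ i j, t < |(p.1 * p.2 - p.2 * p.1) i j|} := by
    intro p (hp : ¬ maxOffDiag _ ≤ t)
    by_contra hgt
    exact hp (Real.iSup_le (fun q ↦ not_lt.1 fun h ↦ hgt ⟨_, _, h⟩) (by positivity))
  linarith [one_sub_measureReal_le_of_compl_subset (μ := (goeMeasure n).prod (goeMeasure n)) hcompl]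

end GOE

/-- For independent GOE matrices `A₁, Z`, the maximal off-diagonal entry of the commutator
`A₁Z − ZA₁` is at most `n^{ε−1/2}` with probability tending to 1. -/
theorem commutator_offdiag_small_whp (ε : ℝ) (hε : 0 < ε) :
    Tendsto
      (fun n : ℕ =>
        ((goeMeasure n).prod (goeMeasure n))
          {p : Matrix (Fin n) (Fin n) ℝ × Matrix (Fin n) (Fin n) ℝ |
            maxOffDiag (p.1 * p.2 - p.2 * p.1) ≤ (n : ℝ) ^ (ε - 1 / 2)})
      atTop (𝓝 1) := by
  have hbound : Tendsto
      (fun n : ℕ ↦ 1 - 4 * ((n : ℝ) ^ 2 * Real.exp (-(1 / 16) * (n : ℝ) ^ ε))) atTop (𝓝 1) := by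
    simpa using (((tendsto_pow_mul_exp_neg_mul_rpow_atTop_nhds_zero 2 hε
      (by norm_num : (0 : ℝ) < 1 / 16)).comp tendsto_natCast_atTop_atTop).const_mul 4).const_sub 1
  have hreal := tendsto_of_tendsto_of_tendsto_of_le_of_le' hbound tendsto_const_nhds
    ((eventually_ne_atTop 0).mono fun _ hn ↦
      GOE.one_sub_le_measureReal_maxOffDiag_commutator_le hn)
    (.of_forall fun n ↦ measureReal_le_one)
  simpa [ofReal_measureReal] using ENNReal.tendsto_ofReal hreal
end

section
/- Let x, y ∈ (0, 1) and C ∈ ℝ. If x·log(x/y) + (1−x)·log((1−x)/(1−y)) ≤ C, then y ≥ x·exp(−(C + 1/e)/x). In particular, if x is bounded below by a positive constant and C is bounded above, then y is bounded below by a positive constant. -/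
/-
The second summand of the divergence is at least `(1 - x) log (1 - x)`, because `1 - y ≤ 1`, and
`t log t ≥ -1/e` for all `t ≥ 0`. Hence `x log (x / y) ≤ C + 1/e`, and exponentiating gives the bound.
-/

open Real

namespace Real

theorem negMulLog_le_exp_neg_one {t : ℝ} (ht : 0 ≤ t) : negMulLog t ≤ exp (-1) := by
  rcases ht.eq_or_lt with rfl | ht
  · simp [(exp_pos _).le]
  -- `-log t ≤ exp (-1 - log t) = exp (-1) / t` by `s + 1 ≤ exp s` at `s = -1 - log t`.
  have h : -log t ≤ exp (-1) / t := by
    have := add_one_le_exp (-1 - log t)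
    rw [exp_sub, exp_log ht] at this
    linarith
  calc negMulLog t = t * -log t := by rw [negMulLog]; ring
    _ ≤ t * (exp (-1) / t) := mul_le_mul_of_nonneg_left h ht.le
    _ = exp (-1) := mul_div_cancel₀ _ ht.ne'

theorem neg_exp_neg_one_le_mul_log_div {a b : ℝ} (ha : 0 ≤ a) (hb₀ : 0 < b) (hb₁ : b ≤ 1) :
    -exp (-1) ≤ a * log (a / b) := by
  rcases ha.eq_or_lt with rfl | ha
  · simp [(exp_pos _).le]
  have hlog : log a ≤ log (a / b) := log_le_log ha (le_div_self ha.le hb₀ hb₁)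
  have hneg : -exp (-1) ≤ a * log a := by
    have := negMulLog_le_exp_neg_one ha.le
    rw [negMulLog] at this
    linarith
  exact hneg.trans (mul_le_mul_of_nonneg_left hlog ha.le)

theorem mul_exp_neg_div_le_of_mul_log_div_le {x y D : ℝ} (hx : 0 < x) (hy : 0 < y)
    (h : x * log (x / y) ≤ D) : x * exp (-D / x) ≤ y := by
  have hlog : log x - log y ≤ D / x := by
    rw [← log_div hx.ne' hy.ne', le_div_iff₀' hx]
    exact h
  rw [← log_le_log_iff (by positivity) hy, log_mul hx.ne' (exp_pos _).ne', log_exp, neg_div]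
  linarith

end Real

/-- If the Kullback–Leibler divergence between Bernoulli(x) and Bernoulli(y) is at most `C`,
then `y ≥ x · exp(−(C + 1/e)/x)`. -/
theorem bernoulli_kl_lower_bound (x y C : ℝ) (hx0 : 0 < x) (hx1 : x < 1)
    (hy0 : 0 < y) (hy1 : y < 1)
    (hKL : x * Real.log (x / y) + (1 - x) * Real.log ((1 - x) / (1 - y)) ≤ C) :
    x * Real.exp (-(C + 1 / Real.exp 1) / x) ≤ y := by
  have hsecond : -exp (-1) ≤ (1 - x) * log ((1 - x) / (1 - y)) :=
    neg_exp_neg_one_le_mul_log_div (by linarith) (by linarith) (by linarith)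
  have hfirst : x * log (x / y) ≤ C + 1 / exp 1 := by
    rw [one_div, ← exp_neg]
    linarith
  exact mul_exp_neg_div_le_of_mul_log_div_le hx0 hy0 hfirst
end

section
/- Let n ≥ 1, let X be an n×n doubly stochastic matrix, let π be a permutation of {1,…,n} with permutation matrix Π (where Π(i,j) = 1 if j = π(i) and 0 otherwise), and let π̂ : {1,…,n} → {1,…,n} be any function such that for every i, X(i, π̂(i)) = max_{j} X(i, j). Then #{i ∈ {1,…,n} : π̂(i) ≠ π(i)} ≤ 4·‖X − Π‖_F². In particular, if ‖X − Π‖_F² ≤ δn then the overlap n⁻¹·#{i : π̂(i) = π(i)} is at least 1 − 4δ. -/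
open Matrix

/-- Permutation matrix of a permutation. -/
def permMatrix {n : ℕ} (π : Equiv.Perm (Fin n)) : Matrix (Fin n) (Fin n) ℝ :=
  Matrix.of fun i j => if j = π i then (1 : ℝ) else 0

/-! A misassigned row `i` has two entries `X i (π i) ≤ X i (π̂ i)` in a nonnegative row of sum 1,
so `X i (π i) ≤ 1/2` and the single entry `(X - Π) i (π i) = X i (π i) - 1` already contributes
`1/4` to `‖X - Π‖_F²`. -/

lemma le_half_of_le_of_sum_eq_one {ι : Type*} [Fintype ι] {x : ι → ℝ} (hx : ∀ i, 0 ≤ x i)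
    (hsum : ∑ i, x i = 1) {j k : ι} (hjk : j ≠ k) (hle : x j ≤ x k) : x j ≤ 1 / 2 := by
  classical
  have hpair : x j + x k ≤ 1 := by
    rw [← Finset.sum_pair hjk, ← hsum]
    exact Finset.sum_le_univ_sum_of_nonneg hx
  linarith

lemma sub_permMatrix_apply_self {n : ℕ} (X : Matrix (Fin n) (Fin n) ℝ)
    (π : Equiv.Perm (Fin n)) (i : Fin n) : (X - permMatrix π) i (π i) = X i (π i) - 1 := by
  simp [permMatrix]

lemma quarter_le_sum_sq_sub_permMatrix_row {n : ℕ} {X : Matrix (Fin n) (Fin n) ℝ}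
    (π : Equiv.Perm (Fin n)) {i k : Fin n} (hX : ∀ j, 0 ≤ X i j) (hrow : ∑ j, X i j = 1)
    (hk : π i ≠ k) (hle : X i (π i) ≤ X i k) :
    1 / 4 ≤ ∑ j, ((X - permMatrix π) i j) ^ 2 := by
  have hhalf := le_half_of_le_of_sum_eq_one hX hrow hk hle
  calc (1 : ℝ) / 4 ≤ (X i (π i) - 1) ^ 2 := by nlinarith [hX (π i)]
    _ = ((X - permMatrix π) i (π i)) ^ 2 := by rw [sub_permMatrix_apply_self]
    _ ≤ ∑ j, ((X - permMatrix π) i j) ^ 2 :=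
        Finset.single_le_sum (f := fun j => ((X - permMatrix π) i j) ^ 2)
          (fun j _ => sq_nonneg _) (Finset.mem_univ _)

lemma card_argmax_ne_le_four_mul_frob2 {n : ℕ} {X : Matrix (Fin n) (Fin n) ℝ}
    (hX : ∀ i j, 0 ≤ X i j) (hrow : ∀ i, ∑ j, X i j = 1) (π : Equiv.Perm (Fin n))
    {πhat : Fin n → Fin n} (hmax : ∀ i j, X i j ≤ X i (πhat i)) :
    ((Finset.univ.filter fun i => πhat i ≠ π i).card : ℝ) ≤ 4 * frob2 (X - permMatrix π) := by
  set bad := Finset.univ.filter fun i => πhat i ≠ π i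
  calc (bad.card : ℝ) = 4 * (bad.card • (1 / 4 : ℝ)) := by rw [nsmul_eq_mul]; ring
    _ ≤ 4 * ∑ i ∈ bad, ∑ j, ((X - permMatrix π) i j) ^ 2 := by
        gcongr
        refine Finset.card_nsmul_le_sum _ _ _ fun i hi => ?_
        exact quarter_le_sum_sq_sub_permMatrix_row π (hX i) (hrow i)
          (Ne.symm (Finset.mem_filter.mp hi).2) (hmax i (π i))
    _ ≤ 4 * frob2 (X - permMatrix π) := by
        gcongr
        exact Finset.sum_le_univ_sum_of_nonneg fun i => by positivity

/-- If `X` is doubly stochastic, `Π` is the permutation matrix of `π`, and `π̂(i)` is a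
row-wise argmax of `X`, then `#{i : π̂(i) ≠ π(i)} ≤ 4‖X − Π‖_F²`; in particular,
`‖X − Π‖_F² ≤ δn` implies overlap at least `1 − 4δ`. -/
theorem rowwise_argmax_overlap (n : ℕ) (hn : 1 ≤ n)
    (X : Matrix (Fin n) (Fin n) ℝ) (hX : X ∈ Birkhoff n)
    (π : Equiv.Perm (Fin n)) (πhat : Fin n → Fin n)
    (hmax : ∀ i j, X i j ≤ X i (πhat i)) :
    ((Finset.univ.filter fun i => πhat i ≠ π i).card : ℝ)
        ≤ 4 * frob2 (X - permMatrix π) ∧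
      ∀ δ : ℝ, frob2 (X - permMatrix π) ≤ δ * n →
        1 - 4 * δ ≤ ((Finset.univ.filter fun i => πhat i = π i).card : ℝ) / n := by
  obtain ⟨hX0, hrow, -⟩ := hX
  have hbad := card_argmax_ne_le_four_mul_frob2 hX0 hrow π hmax
  refine ⟨hbad, fun δ hδ => ?_⟩
  have hsplit := Finset.card_filter_add_card_filter_not (s := Finset.univ)
    (fun i => πhat i = π i)
  rw [Finset.card_univ, Fintype.card_fin] at hsplit
  have hsplitR : ((Finset.univ.filter fun i => πhat i = π i).card : ℝ)
      + ((Finset.univ.filter fun i => πhat i ≠ π i).card : ℝ) = n := by exact_mod_cast hsplit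
  have hn' : (0 : ℝ) < n := by exact_mod_cast hn
  rw [le_div_iff₀ hn']
  linarith
end
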